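/- Let f(u) = 0 for u ≤ e⁻¹, f(u) = 2/e + u·log(u²) for u > e⁻¹, and F(u) = ∫₀ᵘ f(s) ds. Then f(s)·s ≥ 2·F(s) ≥ 0 for all s ∈ ℝ. -/

import Mathlib

/-!
Below `e⁻¹` both `f` and `F` vanish. Above it `f u = 2 e⁻¹ + 2 u log u`, which has the primitive
`2 u e⁻¹ + u² log u - u² / 2`; computing `F` from it gives `s f(s) - 2 F(s) = (s - e⁻¹)²`.
Nonnegativity of `F` comes from `f ≥ 0`, i.e. from `u log u ≥ -e⁻¹`, as `u log u` is increasing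
on `[e⁻¹, ∞)`.
-/

open Real

noncomputable def f (u : ℝ) : ℝ :=
  if u ≤ (Real.exp 1)⁻¹ then 0 else 2 / Real.exp 1 + u * Real.log (u ^ 2)

noncomputable def F (u : ℝ) : ℝ := ∫ s in (0 : ℝ)..u, f s

lemma exp_one_inv_pos : 0 < (exp 1)⁻¹ := inv_pos.mpr (exp_pos 1)

lemma f_eq_ite : f = fun u ↦ if u ≤ (exp 1)⁻¹ then 0 else 2 / exp 1 + 2 * (u * log u) := by
  funext u
  simp only [f, log_pow]
  push_cast
  ring_nf

lemma upper_branch_exp_one_inv_eq_zero : 2 / exp 1 + 2 * ((exp 1)⁻¹ * log (exp 1)⁻¹) = 0 := by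
  rw [log_inv, log_exp]
  ring

lemma f_eq_zero_of_le {u : ℝ} (hu : u ≤ (exp 1)⁻¹) : f u = 0 := by
  simp [f, hu]

lemma f_eq_of_le {u : ℝ} (hu : (exp 1)⁻¹ ≤ u) : f u = 2 / exp 1 + 2 * (u * log u) := by
  rw [f_eq_ite]
  dsimp only
  split_ifs with h
  · rw [le_antisymm h hu, upper_branch_exp_one_inv_eq_zero]
  · rfl

lemma continuous_f : Continuous f := by
  rw [f_eq_ite]
  refine Continuous.if_le continuous_const ?_ continuous_id continuous_const ?_
  · fun_prop
  · rintro u rfl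
    exact upper_branch_exp_one_inv_eq_zero.symm

lemma f_nonneg (u : ℝ) : 0 ≤ f u := by
  rcases le_total u (exp 1)⁻¹ with hu | hu
  · rw [f_eq_zero_of_le hu]
  · rw [f_eq_of_le hu, ← upper_branch_exp_one_inv_eq_zero]
    have hmono := mul_log_strictMonoOn.monotoneOn (a := (exp 1)⁻¹) (b := u)
      (by simp [exp_neg]) (by simpa [exp_neg] using hu) hu
    linarith

noncomputable def fPrimitive (u : ℝ) : ℝ := 2 * u / exp 1 + u ^ 2 * log u - u ^ 2 / 2

lemma hasDerivAt_fPrimitive {u : ℝ} (hu : (exp 1)⁻¹ ≤ u) : HasDerivAt fPrimitive (f u) u := by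
  have hu0 : u ≠ 0 := (exp_one_inv_pos.trans_le hu).ne'
  rw [f_eq_of_le hu]
  have h := ((((hasDerivAt_id u).const_mul 2).div_const (exp 1)).add
    ((hasDerivAt_pow 2 u).mul (hasDerivAt_log hu0))).sub ((hasDerivAt_pow 2 u).div_const 2)
  exact h.congr_deriv (by field_simp; ring)

lemma F_eq_zero_of_le {s : ℝ} (hs : s ≤ (exp 1)⁻¹) : F s = 0 := by
  rw [F, intervalIntegral.integral_congr (g := fun _ ↦ 0), intervalIntegral.integral_zero]
  intro u hu
  exact f_eq_zero_of_le ((Set.mem_uIcc.mp hu).elim (·.2.trans hs) (·.2.trans exp_one_inv_pos.le))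

lemma F_eq_of_le {s : ℝ} (hs : (exp 1)⁻¹ ≤ s) :
    F s = fPrimitive s - fPrimitive (exp 1)⁻¹ := by
  have hint : ∀ a b, IntervalIntegrable f MeasureTheory.volume a b :=
    fun _ _ ↦ continuous_f.intervalIntegrable _ _
  rw [F, ← intervalIntegral.integral_add_adjacent_intervals (hint 0 (exp 1)⁻¹) (hint _ s),
    ← F, F_eq_zero_of_le le_rfl, zero_add]
  refine intervalIntegral.integral_eq_sub_of_hasDerivAt (fun u hu ↦ ?_) (hint _ _)
  rw [Set.uIcc_of_le hs] at hu
  exact hasDerivAt_fPrimitive hu.1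

lemma f_mul_sub_two_mul_F {s : ℝ} (hs : (exp 1)⁻¹ ≤ s) :
    f s * s - 2 * F s = (s - (exp 1)⁻¹) ^ 2 := by
  rw [f_eq_of_le hs, F_eq_of_le hs, fPrimitive, fPrimitive, log_inv, log_exp]
  field_simp
  ring

lemma two_mul_F_le (s : ℝ) : 2 * F s ≤ f s * s := by
  rcases le_total s (exp 1)⁻¹ with hs | hs
  · simp [F_eq_zero_of_le hs, f_eq_zero_of_le hs]
  · linarith [f_mul_sub_two_mul_F hs, sq_nonneg (s - (exp 1)⁻¹)]

lemma F_nonneg (s : ℝ) : 0 ≤ F s := by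
  rcases le_total s (exp 1)⁻¹ with hs | hs
  · exact (F_eq_zero_of_le hs).ge
  · exact intervalIntegral.integral_nonneg (exp_one_inv_pos.le.trans hs) fun u _ ↦ f_nonneg u

theorem f_F_inequality : ∀ s : ℝ, 2 * F s ≤ f s * s ∧ 0 ≤ F s :=
  fun s ↦ ⟨two_mul_F_le s, F_nonneg s⟩
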